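/- arXiv:math/0506159 — 2 statements merged into one kernel-verified Lean document; each statement's English description precedes it below -/
import Mathlib

section
/- A maximal nested set for an irreducible root system of rank r has exactly r elements: if Δ⁺ spans an r-dimensional space E* and M is a nested collection of irreducible complete subsets of Δ⁺ that is maximal with respect to inclusion, then |M| = r. -/
/- DeConcini-Procesi complete, irreducible and nested subsets of a finite
vector configuration `Δ` (the set of positive roots) in a real vector space. -/

open scoped BigOperators

variable {V : Type*} [AddCommGroup V] [Module ℝ V] [DecidableEq V]

/-- A subset `S ⊆ Δ` is complete if `S = ⟨S⟩ ∩ Δ`. -/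
def IsCompleteSub (Δ S : Finset V) : Prop :=
  S ⊆ Δ ∧ ∀ α ∈ Δ, (α : V) ∈ Submodule.span ℝ (S : Set V) → α ∈ S

/-- A complete subset `S` is irreducible if it admits no nontrivial
decomposition `S = S₁ ∪ S₂` with `S₁`, `S₂` lying in complementary subspaces
(equivalently, with linearly disjoint spans). -/
def IsIrreducibleSub (Δ S : Finset V) : Prop :=
  IsCompleteSub Δ S ∧ S.Nonempty ∧
    ¬ ∃ S₁ S₂ : Finset V, S₁.Nonempty ∧ S₂.Nonempty ∧ S₁ ∪ S₂ = S ∧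
      Disjoint (Submodule.span ℝ (S₁ : Set V)) (Submodule.span ℝ (S₂ : Set V))

/-- A collection `M` of irreducible subsets of `Δ` is nested if for every
antichain `T ⊆ M` the union of `T` is complete and the members of `T` are
precisely its irreducible components: each member is a maximal irreducible
subset of the union, and every irreducible subset of the union is contained in
a member. -/
def IsNestedSub (Δ : Finset V) (M : Finset (Finset V)) : Prop :=
  (∀ S ∈ M, IsIrreducibleSub Δ S) ∧
  ∀ T ⊆ M, (∀ S₁ ∈ T, ∀ S₂ ∈ T, S₁ ⊆ S₂ → S₁ = S₂) →
    IsCompleteSub Δ (T.sup id) ∧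
    (∀ S ∈ T, ∀ S' : Finset V, S ⊆ S' → S' ⊆ T.sup id →
      IsIrreducibleSub Δ S' → S' = S) ∧
    (∀ S' : Finset V, S' ⊆ T.sup id → IsIrreducibleSub Δ S' →
      ∃ S ∈ T, S' ⊆ S)

set_option linter.unusedSectionVars false

/-! ### Auxiliary machinery -/

/-- Span of a finset. -/
abbrev spn (S : Finset V) : Submodule ℝ V := Submodule.span ℝ (S : Set V)

/-- The no-decomposition condition of `IsIrreducibleSub`. -/
def NoDecomp (S : Finset V) : Prop :=
  ¬ ∃ S₁ S₂ : Finset V, S₁.Nonempty ∧ S₂.Nonempty ∧ S₁ ∪ S₂ = S ∧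
      Disjoint (Submodule.span ℝ (S₁ : Set V)) (Submodule.span ℝ (S₂ : Set V))

lemma isIrr_def {Δ S : Finset V} :
    IsIrreducibleSub Δ S ↔ IsCompleteSub Δ S ∧ S.Nonempty ∧ NoDecomp S := Iff.rfl

lemma spn_mono {S T : Finset V} (h : S ⊆ T) : spn S ≤ spn T :=
  Submodule.span_mono (by exact_mod_cast h)

lemma spn_union (S T : Finset V) : spn (S ∪ T) = spn S ⊔ spn T := by
  rw [spn, Finset.coe_union, Submodule.span_union]

lemma spn_empty : spn (∅ : Finset V) = ⊥ := by simp [spn]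

lemma mem_spn_of_mem {S : Finset V} {x : V} (h : x ∈ S) : x ∈ spn S :=
  Submodule.subset_span (by exact_mod_cast h)

/-- Independence of a family of finsets: each one has span disjoint from the span
of the union of the others. -/
def Indep (𝒞 : Finset (Finset V)) : Prop :=
  ∀ C ∈ 𝒞, Disjoint (spn C) (spn ((𝒞.erase C).sup id))

lemma Indep.mono {𝒞 𝒟 : Finset (Finset V)} (h : 𝒟 ⊆ 𝒞) (hi : Indep 𝒞) : Indep 𝒟 := by
  intro C hC
  refine Disjoint.mono_right ?_ (hi C (h hC))
  exact spn_mono (Finset.sup_mono (Finset.erase_subset_erase _ h))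

lemma Indep.pair {𝒞 : Finset (Finset V)} (hi : Indep 𝒞) {C C' : Finset V}
    (hC : C ∈ 𝒞) (hC' : C' ∈ 𝒞) (hne : C ≠ C') : Disjoint (spn C) (spn C') := by
  refine Disjoint.mono_right ?_ (hi C hC)
  exact spn_mono (Finset.le_sup (f := id) (Finset.mem_erase.mpr ⟨fun h => hne h.symm, hC'⟩))

lemma false_of_nonempty_le_disjoint {Δ S : Finset V} (h0 : (0 : V) ∉ Δ)
    (hSΔ : S ⊆ Δ) (hne : S.Nonempty) {Z P : Submodule ℝ V}
    (hZ : spn S ≤ Z) (hP : spn S ≤ P) (hd : Disjoint Z P) : False := by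
  obtain ⟨x, hx⟩ := hne
  have hx0 : x = 0 := by
    have := hd.le_bot ⟨hZ (mem_spn_of_mem hx), hP (mem_spn_of_mem hx)⟩
    simpa using this
  exact h0 (hx0 ▸ hSΔ hx)

/-- Binary splitting: a set with no decomposition contained in a union of two
span-disjoint sets lies entirely in one of them. -/
lemma split2 {S A B : Finset V} (hnd : NoDecomp S)
    (hsub : S ⊆ A ∪ B) (hd : Disjoint (spn A) (spn B)) : S ⊆ A ∨ S ⊆ B := by
  rcases (S ∩ A).eq_empty_or_nonempty with h1 | h1
  · right
    intro x hx
    rcases Finset.mem_union.mp (hsub hx) with h | h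
    · exact absurd (Finset.mem_inter.mpr ⟨hx, h⟩) (by simp [h1])
    · exact h
  rcases (S \ A).eq_empty_or_nonempty with h2 | h2
  · left
    intro x hx
    by_contra hxA
    exact absurd (Finset.mem_sdiff.mpr ⟨hx, hxA⟩) (by simp [h2])
  exfalso
  apply hnd
  refine ⟨S ∩ A, S \ A, h1, h2, ?_, ?_⟩
  · ext x
    simp only [Finset.mem_union, Finset.mem_inter, Finset.mem_sdiff]
    tauto
  · refine Disjoint.mono ?_ ?_ hd
    · exact spn_mono (Finset.inter_subset_right)
    · refine spn_mono ?_
      intro x hx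
      rcases Finset.mem_sdiff.mp hx with ⟨hxS, hxA⟩
      rcases Finset.mem_union.mp (hsub hxS) with h | h
      · exact absurd h hxA
      · exact h

lemma mem_left_of_mem_sup {Z P W Q : Submodule ℝ V} (hd : Disjoint Z P)
    (hW : W ≤ Z) (hQ : Q ≤ P) {x : V} (hx : x ∈ W ⊔ Q) (hxZ : x ∈ Z) : x ∈ W := by
  obtain ⟨w, hw, q, hq, rfl⟩ := Submodule.mem_sup.mp hx
  have hqZ : q ∈ Z := by
    have : w + q - w ∈ Z := Submodule.sub_mem _ hxZ (hW hw)
    simpa using this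
  have : q = 0 := by
    have := hd.le_bot ⟨hqZ, hQ hq⟩
    simpa using this
  simpa [this] using hw

lemma sup_subset_of_forall {T : Finset (Finset V)} {C : Finset V}
    (h : ∀ S ∈ T, S ⊆ C) : T.sup id ⊆ C := Finset.sup_le h

lemma subset_sup {T : Finset (Finset V)} {S : Finset V} (h : S ∈ T) : S ⊆ T.sup id :=
  Finset.le_sup (f := id) h

/-- Multi-way splitting over an independent family. -/
lemma splitFam : ∀ (n : ℕ) (𝒞 : Finset (Finset V)), 𝒞.card ≤ n → Indep 𝒞 →
    ∀ (T : Finset (Finset V)), (∀ S ∈ T, ∃ C ∈ 𝒞, S ⊆ C) →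
    ∀ (S'' : Finset V), S''.Nonempty → NoDecomp S'' → S'' ⊆ T.sup id →
    ∃ C ∈ 𝒞, S'' ⊆ (T.filter (· ⊆ C)).sup id := by
  intro n
  induction n with
  | zero =>
    intro 𝒞 hc _ T hmem S'' hne _ hsub
    exfalso
    have h𝒞 : 𝒞 = ∅ := Finset.card_eq_zero.mp (Nat.le_zero.mp hc)
    have hT : T = ∅ := by
      refine Finset.eq_empty_of_forall_notMem fun S hS => ?_
      obtain ⟨C, hC, -⟩ := hmem S hS
      simp [h𝒞] at hC
    obtain ⟨x, hx⟩ := hne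
    have := hsub hx
    simp [hT] at this
  | succ n IH =>
    intro 𝒞 hc hind T hmem S'' hne hnd hsub
    rcases 𝒞.eq_empty_or_nonempty with rfl | ⟨C₀, hC₀⟩
    · exfalso
      have hT : T = ∅ := by
        refine Finset.eq_empty_of_forall_notMem fun S hS => ?_
        obtain ⟨C, hC, -⟩ := hmem S hS
        simp at hC
      obtain ⟨x, hx⟩ := hne
      have := hsub hx
      simp [hT] at this
    classical
    set T₁ := T.filter (· ⊆ C₀) with hT₁
    set T₂ := T.filter (fun S => ¬ S ⊆ C₀) with hT₂
    have hTun : T₁ ∪ T₂ = T := Finset.filter_union_filter_not_eq _ T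
    have hsub' : S'' ⊆ T₁.sup id ∪ T₂.sup id := by
      intro x hx
      have := hsub hx
      rw [← hTun, Finset.sup_union] at this
      exact this
    have hsp1 : spn (T₁.sup id) ≤ spn C₀ :=
      spn_mono (sup_subset_of_forall fun S hS => (Finset.mem_filter.mp hS).2)
    have hsp2 : spn (T₂.sup id) ≤ spn ((𝒞.erase C₀).sup id) := by
      refine spn_mono (sup_subset_of_forall fun S hS => ?_)
      obtain ⟨hST, hSC₀⟩ := Finset.mem_filter.mp hS
      obtain ⟨C, hC, hSC⟩ := hmem S hST
      have hCne : C ≠ C₀ := fun h => hSC₀ (h ▸ hSC)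
      exact hSC.trans (subset_sup (Finset.mem_erase.mpr ⟨hCne, hC⟩))
    rcases split2 hnd hsub' (Disjoint.mono hsp1 hsp2 (hind C₀ hC₀)) with h | h
    · exact ⟨C₀, hC₀, h⟩
    · have hcard : (𝒞.erase C₀).card ≤ n := by
        rw [Finset.card_erase_of_mem hC₀]
        omega
      have hmem₂ : ∀ S ∈ T₂, ∃ C ∈ 𝒞.erase C₀, S ⊆ C := by
        intro S hS
        obtain ⟨hST, hSC₀⟩ := Finset.mem_filter.mp hS
        obtain ⟨C, hC, hSC⟩ := hmem S hST
        exact ⟨C, Finset.mem_erase.mpr ⟨fun h => hSC₀ (h ▸ hSC), hC⟩, hSC⟩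
      obtain ⟨C, hC, hsubC⟩ := IH (𝒞.erase C₀) hcard (hind.mono (Finset.erase_subset _ _))
        T₂ hmem₂ S'' hne hnd h
      refine ⟨C, Finset.mem_of_mem_erase hC, hsubC.trans (Finset.sup_mono ?_)⟩
      intro x hx
      rw [Finset.mem_filter] at hx ⊢
      exact ⟨(Finset.mem_filter.mp hx.1).1, hx.2⟩

lemma splitElem {𝒞 : Finset (Finset V)} (hind : Indep 𝒞) {S : Finset V}
    (hne : S.Nonempty) (hnd : NoDecomp S) (h : S ⊆ 𝒞.sup id) : ∃ C ∈ 𝒞, S ⊆ C := by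
  classical
  obtain ⟨C, hC, hsub⟩ := splitFam 𝒞.card 𝒞 le_rfl hind 𝒞
    (fun C hC => ⟨C, hC, Finset.Subset.refl _⟩) S hne hnd h
  exact ⟨C, hC, hsub.trans (sup_subset_of_forall fun x hx => (Finset.mem_filter.mp hx).2)⟩

/-- Decomposition of a complete set into irreducible components with
independent spans. -/
lemma exists_components (Δ : Finset V) (h0 : (0 : V) ∉ Δ) :
    ∀ (n : ℕ) (C : Finset V), C.card ≤ n → IsCompleteSub Δ C →
    ∃ 𝒞 : Finset (Finset V), 𝒞.sup id = C ∧ (∀ C' ∈ 𝒞, IsIrreducibleSub Δ C') ∧ Indep 𝒞 := by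
  intro n
  induction n with
  | zero =>
    intro C hc _
    have : C = ∅ := Finset.card_eq_zero.mp (Nat.le_zero.mp hc)
    subst this
    exact ⟨∅, by simp, by simp, by intro C hC; simp at hC⟩
  | succ n IH =>
    intro C hc hcomp
    rcases C.eq_empty_or_nonempty with rfl | hCne
    · exact ⟨∅, by simp, by simp, by intro C hC; simp at hC⟩
    by_cases hnd : NoDecomp C
    · refine ⟨{C}, by simp, ?_, ?_⟩
      · intro C' hC'
        rw [Finset.mem_singleton] at hC'
        subst hC'
        exact ⟨hcomp, hCne, hnd⟩
      · intro C' hC'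
        rw [Finset.mem_singleton] at hC'
        subst hC'
        simp [spn_empty]
    · rw [NoDecomp, not_not] at hnd
      obtain ⟨S₁, S₂, hne₁, hne₂, hun, hdis⟩ := hnd
      have hS₁C : S₁ ⊆ C := hun ▸ Finset.subset_union_left
      have hS₂C : S₂ ⊆ C := hun ▸ Finset.subset_union_right
      have hCD : C ⊆ Δ := hcomp.1
      have hnotmem : ∀ x, x ∈ S₁ → x ∈ S₂ → False := by
        intro x hx1 hx2
        have := hdis.le_bot ⟨mem_spn_of_mem hx1, mem_spn_of_mem hx2⟩
        simp only [Submodule.mem_bot] at this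
        exact h0 (this ▸ hCD (hS₁C hx1))
      have hssub₁ : S₁ ⊂ C := by
        refine ⟨hS₁C, fun h => ?_⟩
        obtain ⟨x, hx⟩ := hne₂
        exact hnotmem x (h (hS₂C hx)) hx
      have hssub₂ : S₂ ⊂ C := by
        refine ⟨hS₂C, fun h => ?_⟩
        obtain ⟨x, hx⟩ := hne₁
        exact hnotmem x hx (h (hS₁C hx))
      have hcomp₁ : IsCompleteSub Δ S₁ := by
        refine ⟨hS₁C.trans hCD, fun α hα hsp => ?_⟩
        have hαC : α ∈ C := hcomp.2 α hα ((spn_mono hS₁C) hsp)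
        rcases Finset.mem_union.mp (hun ▸ hαC) with h | h
        · exact h
        · exfalso
          have := hdis.le_bot ⟨hsp, mem_spn_of_mem h⟩
          simp only [Submodule.mem_bot] at this
          exact h0 (this ▸ hα)
      have hcomp₂ : IsCompleteSub Δ S₂ := by
        refine ⟨hS₂C.trans hCD, fun α hα hsp => ?_⟩
        have hαC : α ∈ C := hcomp.2 α hα ((spn_mono hS₂C) hsp)
        rcases Finset.mem_union.mp (hun ▸ hαC) with h | h
        · exfalso
          have := hdis.le_bot ⟨mem_spn_of_mem h, hsp⟩
          simp only [Submodule.mem_bot] at this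
          exact h0 (this ▸ hα)
        · exact h
      obtain ⟨𝒞₁, hsup₁, hirr₁, hind₁⟩ := IH S₁
        (by have := Finset.card_lt_card hssub₁; omega) hcomp₁
      obtain ⟨𝒞₂, hsup₂, hirr₂, hind₂⟩ := IH S₂
        (by have := Finset.card_lt_card hssub₂; omega) hcomp₂
      refine ⟨𝒞₁ ∪ 𝒞₂, by rw [Finset.sup_union, hsup₁, hsup₂]; exact hun, ?_, ?_⟩
      · intro C' hC'
        rcases Finset.mem_union.mp hC' with h | h
        · exact hirr₁ C' h
        · exact hirr₂ C' h
      · intro C' hC'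
        have key : ∀ (𝒜 ℬ : Finset (Finset V)) (A B : Finset V), 𝒜.sup id = A →
            ℬ.sup id = B → Indep 𝒜 → Disjoint (spn A) (spn B) → C' ∈ 𝒜 →
            ((𝒜 ∪ ℬ).erase C') ⊆ (𝒜.erase C') ∪ ℬ →
            Disjoint (spn C') (spn (((𝒜 ∪ ℬ).erase C').sup id)) := by
          intro 𝒜 ℬ A B hsA hsB hiA hAB hC'A hsubE
          have hle : spn (((𝒜 ∪ ℬ).erase C').sup id) ≤ spn ((𝒜.erase C').sup id ∪ ℬ.sup id) :=
            spn_mono ((Finset.sup_mono hsubE).trans (le_of_eq (Finset.sup_union)))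
          refine Disjoint.mono_right (hle.trans (le_of_eq (spn_union _ _))) ?_
          have h1 : Disjoint (spn C') (spn ((𝒜.erase C').sup id)) := hiA C' hC'A
          have h2 : Disjoint (spn C' ⊔ spn ((𝒜.erase C').sup id)) (spn B) := by
            refine Disjoint.mono_left ?_ hAB
            refine sup_le ?_ ?_
            · exact spn_mono (hsA ▸ subset_sup hC'A)
            · exact spn_mono (hsA ▸ Finset.sup_mono (Finset.erase_subset _ _))
          rw [hsB]
          exact h1.disjoint_sup_right_of_disjoint_sup_left h2
        rcases Finset.mem_union.mp hC' with h | h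
        · exact key 𝒞₁ 𝒞₂ S₁ S₂ hsup₁ hsup₂ hind₁ hdis h (by
            intro x hx
            rcases Finset.mem_erase.mp hx with ⟨hxne, hxu⟩
            rcases Finset.mem_union.mp hxu with h1 | h1
            · exact Finset.mem_union_left _ (Finset.mem_erase.mpr ⟨hxne, h1⟩)
            · exact Finset.mem_union_right _ h1)
        · have := key 𝒞₂ 𝒞₁ S₂ S₁ hsup₂ hsup₁ hind₂ hdis.symm h (by
            intro x hx
            rcases Finset.mem_erase.mp hx with ⟨hxne, hxu⟩
            rcases Finset.mem_union.mp hxu with h1 | h1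
            · exact Finset.mem_union_left _ (Finset.mem_erase.mpr ⟨hxne, h1⟩)
            · exact Finset.mem_union_right _ h1)
          refine Disjoint.mono_right ?_ this
          refine spn_mono (Finset.sup_mono ?_)
          exact Finset.erase_subset_erase _ (by rw [Finset.union_comm])

/-- Master assembly lemma: if an antichain-like family `T` partitions into
pieces lying in the members of an independent complete family `𝒞`, and each
piece satisfies the three nested-set conclusions, then so does `T`. -/
lemma assemble (Δ : Finset V) (h0 : (0 : V) ∉ Δ)
    (𝒞 : Finset (Finset V)) (hind : Indep 𝒞)
    (hCsup : IsCompleteSub Δ (𝒞.sup id))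
    (T : Finset (Finset V))
    (hne : ∀ S ∈ T, S.Nonempty)
    (hmem : ∀ S ∈ T, ∃ C ∈ 𝒞, S ⊆ C)
    (hTC : ∀ C ∈ 𝒞,
      IsCompleteSub Δ ((T.filter (· ⊆ C)).sup id) ∧
      (∀ S ∈ T.filter (· ⊆ C), ∀ S' : Finset V, S ⊆ S' →
        S' ⊆ (T.filter (· ⊆ C)).sup id → IsIrreducibleSub Δ S' → S' = S) ∧
      (∀ S' : Finset V, S' ⊆ (T.filter (· ⊆ C)).sup id → IsIrreducibleSub Δ S' →
        ∃ S ∈ T.filter (· ⊆ C), S' ⊆ S)) :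
    IsCompleteSub Δ (T.sup id) ∧
    (∀ S ∈ T, ∀ S' : Finset V, S ⊆ S' → S' ⊆ T.sup id → IsIrreducibleSub Δ S' → S' = S) ∧
    (∀ S' : Finset V, S' ⊆ T.sup id → IsIrreducibleSub Δ S' → ∃ S ∈ T, S' ⊆ S) := by
  classical
  have hCΔ : ∀ C ∈ 𝒞, C ⊆ Δ := fun C hC => (subset_sup hC).trans hCsup.1
  have hTΔ : T.sup id ⊆ Δ := sup_subset_of_forall fun S hS => by
    obtain ⟨C, hC, hSC⟩ := hmem S hS; exact hSC.trans (hCΔ C hC)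
  -- sup splitting facts for a fixed `C₀`
  have hsplit : ∀ C₀ ∈ 𝒞,
      (T.sup id ⊆ (T.filter (· ⊆ C₀)).sup id ∪ (T.filter (fun S => ¬ S ⊆ C₀)).sup id) ∧
      spn ((T.filter (· ⊆ C₀)).sup id) ≤ spn C₀ ∧
      spn ((T.filter (fun S => ¬ S ⊆ C₀)).sup id) ≤ spn ((𝒞.erase C₀).sup id) := by
    intro C₀ hC₀
    refine ⟨?_, ?_, ?_⟩
    · intro x hx
      rw [← Finset.filter_union_filter_not_eq (· ⊆ C₀) T, Finset.sup_union] at hx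
      exact hx
    · exact spn_mono (sup_subset_of_forall fun S hS => (Finset.mem_filter.mp hS).2)
    · refine spn_mono (sup_subset_of_forall fun S hS => ?_)
      obtain ⟨hST, hSC₀⟩ := Finset.mem_filter.mp hS
      obtain ⟨C, hC, hSC⟩ := hmem S hST
      exact hSC.trans (subset_sup (Finset.mem_erase.mpr ⟨fun h => hSC₀ (h ▸ hSC), hC⟩))
  refine ⟨⟨hTΔ, ?_⟩, ?_, ?_⟩
  · -- completeness
    intro β hβ hsp
    have hβsup : β ∈ 𝒞.sup id := by
      refine hCsup.2 β hβ (spn_mono ?_ hsp)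
      refine sup_subset_of_forall fun S hS => ?_
      obtain ⟨C, hC, hSC⟩ := hmem S hS
      exact hSC.trans (subset_sup hC)
    obtain ⟨C₀, hC₀, hβC₀⟩ := Finset.mem_sup.mp hβsup
    obtain ⟨hsub', hsp1, hsp2⟩ := hsplit C₀ hC₀
    have hβ1 : β ∈ spn ((T.filter (· ⊆ C₀)).sup id) := by
      refine mem_left_of_mem_sup (hind C₀ hC₀) hsp1 hsp2 ?_ (mem_spn_of_mem hβC₀)
      have : spn (T.sup id) ≤ spn ((T.filter (· ⊆ C₀)).sup id) ⊔
          spn ((T.filter (fun S => ¬ S ⊆ C₀)).sup id) := by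
        refine (spn_mono hsub').trans (le_of_eq (spn_union _ _))
      exact this hsp
    have hmem' := (hTC C₀ hC₀).1.2 β hβ hβ1
    have hss : (T.filter (· ⊆ C₀)).sup id ⊆ T.sup id := Finset.sup_mono (Finset.filter_subset _ _)
    exact hss hmem'
  · -- maximality
    intro S hS S' hSS' hS'sup hirrS'
    obtain ⟨C₀, hC₀, hSC₀⟩ := hmem S hS
    obtain ⟨hsub', hsp1, hsp2⟩ := hsplit C₀ hC₀
    rcases split2 hirrS'.2.2 (hS'sup.trans hsub')
        (Disjoint.mono hsp1 hsp2 (hind C₀ hC₀)) with h | h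
    · exact (hTC C₀ hC₀).2.1 S (Finset.mem_filter.mpr ⟨hS, hSC₀⟩) S' hSS' h hirrS'
    · exfalso
      refine false_of_nonempty_le_disjoint h0 (hSC₀.trans (hCΔ C₀ hC₀)) (hne S hS)
        (spn_mono hSC₀) ((spn_mono (hSS'.trans h)).trans hsp2) (hind C₀ hC₀)
  · -- coverage
    intro S' hS'sup hirrS'
    obtain ⟨C, hC, hsub⟩ := splitFam 𝒞.card 𝒞 le_rfl hind T hmem S'
      hirrS'.2.1 hirrS'.2.2 hS'sup
    obtain ⟨S, hSmem, hS'S⟩ := (hTC C hC).2.2 S' hsub hirrS'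
    exact ⟨S, (Finset.filter_subset _ _) hSmem, hS'S⟩

/-! ### Transfer lemmas between `Δ` and a complete subset `N` -/

lemma complete_of_complete_sub {Δ N S : Finset V} (hN : IsCompleteSub Δ N)
    (hS : S ⊆ N) (h : IsCompleteSub N S) : IsCompleteSub Δ S := by
  refine ⟨hS.trans hN.1, fun α hα hsp => ?_⟩
  exact h.2 α (hN.2 α hα ((spn_mono hS) hsp)) hsp

lemma complete_sub_of_complete {Δ N S : Finset V} (hNΔ : N ⊆ Δ)
    (hS : S ⊆ N) (h : IsCompleteSub Δ S) : IsCompleteSub N S :=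
  ⟨hS, fun α hα hsp => h.2 α (hNΔ hα) hsp⟩

lemma irr_iff {Δ N S : Finset V} (hN : IsCompleteSub Δ N) (hS : S ⊆ N) :
    IsIrreducibleSub N S ↔ IsIrreducibleSub Δ S := by
  constructor
  · rintro ⟨h1, h2, h3⟩
    exact ⟨complete_of_complete_sub hN hS h1, h2, h3⟩
  · rintro ⟨h1, h2, h3⟩
    exact ⟨complete_sub_of_complete hN.1 hS h1, h2, h3⟩

/-- Antichains in a nested collection have independent spans. -/
lemma antichain_indep {Δ : Finset V} (h0 : (0 : V) ∉ Δ) {M : Finset (Finset V)}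
    (hnested : IsNestedSub Δ M) {T : Finset (Finset V)} (hTM : T ⊆ M)
    (hanti : ∀ S₁ ∈ T, ∀ S₂ ∈ T, S₁ ⊆ S₂ → S₁ = S₂) : Indep T := by
  classical
  obtain ⟨hcomp, hmaxi, hcover⟩ := hnested.2 T hTM hanti
  obtain ⟨𝒞, hsup, hirr, hind⟩ := exists_components Δ h0 (T.sup id).card (T.sup id)
    le_rfl hcomp
  have hT𝒞 : ∀ S ∈ T, S ∈ 𝒞 := by
    intro S hS
    have hirrS := hnested.1 S (hTM hS)
    obtain ⟨C, hC, hSC⟩ := splitElem hind hirrS.2.1 hirrS.2.2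
      (hsup ▸ subset_sup hS)
    obtain ⟨S₂, hS₂, hCS₂⟩ := hcover C (hsup ▸ subset_sup hC) (hirr C hC)
    have : S = S₂ := hanti S hS S₂ hS₂ (hSC.trans hCS₂)
    have hSeqC : S = C := Finset.Subset.antisymm hSC (this ▸ hCS₂)
    exact hSeqC ▸ hC
  have h𝒞T : ∀ C ∈ 𝒞, C ∈ T := by
    intro C hC
    obtain ⟨S, hS, hCS⟩ := hcover C (hsup ▸ subset_sup hC) (hirr C hC)
    have hS𝒞 : S ∈ 𝒞 := hT𝒞 S hS
    by_cases hCSeq : C = S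
    · exact hCSeq ▸ hS
    · exfalso
      exact false_of_nonempty_le_disjoint h0 ((hirr C hC).1.1) ((hirr C hC).2.1)
        le_rfl (spn_mono hCS) (hind.pair hC hS𝒞 hCSeq)
  have : T = 𝒞 := Finset.Subset.antisymm (fun S hS => hT𝒞 S hS) (fun C hC => h𝒞T C hC)
  exact this ▸ hind

/-- Finrank additivity for independent families. -/
lemma finrank_sup_of_indep [FiniteDimensional ℝ V] :
    ∀ (𝒞 : Finset (Finset V)), Indep 𝒞 →
    Module.finrank ℝ (spn (𝒞.sup id)) = ∑ C ∈ 𝒞, Module.finrank ℝ (spn C) := by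
  classical
  intro 𝒞
  induction 𝒞 using Finset.induction_on with
  | empty => simp [spn_empty]
  | @insert C 𝒞' hC IH =>
    intro hind
    have hd : Disjoint (spn C) (spn (𝒞'.sup id)) := by
      have := hind C (Finset.mem_insert_self _ _)
      rwa [Finset.erase_insert hC] at this
    have hind' : Indep 𝒞' := hind.mono (Finset.subset_insert _ _)
    rw [Finset.sup_insert, Finset.sum_insert hC, ← IH hind']
    have : (id C ⊔ 𝒞'.sup id : Finset V) = C ∪ 𝒞'.sup id := rfl
    rw [this, spn_union]
    rw [← Submodule.finrank_sup_add_finrank_inf_eq (spn C) (spn (𝒞'.sup id)),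
      hd.eq_bot, finrank_bot, add_zero]

lemma top_antichain_conds (Δ : Finset V) :
    IsCompleteSub Δ (({Δ} : Finset (Finset V)).sup id) ∧
    (∀ S ∈ ({Δ} : Finset (Finset V)), ∀ S' : Finset V, S ⊆ S' →
      S' ⊆ ({Δ} : Finset (Finset V)).sup id → IsIrreducibleSub Δ S' → S' = S) ∧
    (∀ S' : Finset V, S' ⊆ ({Δ} : Finset (Finset V)).sup id → IsIrreducibleSub Δ S' →
      ∃ S ∈ ({Δ} : Finset (Finset V)), S' ⊆ S) := by
  simp only [Finset.sup_singleton, id]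
  refine ⟨⟨Finset.Subset.refl _, fun α hα _ => hα⟩, ?_, ?_⟩
  · intro S hS S' h1 h2 _
    rw [Finset.mem_singleton] at hS; subst hS
    exact Finset.Subset.antisymm h2 h1
  · intro S' h1 _
    exact ⟨Δ, Finset.mem_singleton_self _, h1⟩

lemma main_aux [FiniteDimensional ℝ V] :
    ∀ (n : ℕ) (Δ : Finset V), Δ.card ≤ n → (0 : V) ∉ Δ → IsIrreducibleSub Δ Δ →
    ∀ M : Finset (Finset V), IsNestedSub Δ M →
    (∀ M' : Finset (Finset V), IsNestedSub Δ M' → M ⊆ M' → M' = M) →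
    M.card = Module.finrank ℝ (spn Δ) := by
  intro n
  induction n with
  | zero =>
    intro Δ hc _ hirr M _ _
    exfalso
    obtain ⟨x, hx⟩ := hirr.2.1
    have hΔe : Δ = ∅ := Finset.card_eq_zero.mp (Nat.le_zero.mp hc)
    rw [hΔe] at hx
    simp at hx
  | succ n IH =>
    intro Δ hcard h0 hirr M hnested hmax
    classical
    have hsubΔ : ∀ S ∈ M, S ⊆ Δ := fun S hS => (hnested.1 S hS).1.1
    -- Step 1 : Δ ∈ M
    have hΔM : Δ ∈ M := by
      have hnest' : IsNestedSub Δ (insert Δ M) := by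
        constructor
        · intro S hS
          rcases Finset.mem_insert.mp hS with rfl | hS
          · exact hirr
          · exact hnested.1 S hS
        · intro T hT hanti
          by_cases hΔT : Δ ∈ T
          · have hTeq : T = {Δ} := by
              apply Finset.eq_singleton_iff_unique_mem.mpr
              refine ⟨hΔT, fun S hS => ?_⟩
              have hSΔ' : S ⊆ Δ := by
                rcases Finset.mem_insert.mp (hT hS) with rfl | h
                · exact Finset.Subset.refl _
                · exact hsubΔ S h
              exact hanti S hS Δ hΔT hSΔ'
            rw [hTeq]
            exact top_antichain_conds Δ
          · refine hnested.2 T ?_ hanti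
            intro S hS
            rcases Finset.mem_insert.mp (hT hS) with rfl | h
            · exact absurd hS hΔT
            · exact h
      have := hmax _ hnest' (Finset.subset_insert _ _)
      rw [← this]
      exact Finset.mem_insert_self _ _
    -- Step 2 : children
    set ch : Finset (Finset V) :=
      (M.erase Δ).filter (fun N => ∀ S ∈ M.erase Δ, N ⊆ S → N = S) with hch
    have hchM : ∀ N ∈ ch, N ∈ M ∧ N ≠ Δ := by
      intro N hN
      have h := Finset.mem_filter.mp hN
      exact ⟨Finset.mem_of_mem_erase h.1, (Finset.mem_erase.mp h.1).1⟩
    have hchanti : ∀ S₁ ∈ ch, ∀ S₂ ∈ ch, S₁ ⊆ S₂ → S₁ = S₂ := by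
      intro S₁ h₁ S₂ h₂ hsub
      exact (Finset.mem_filter.mp h₁).2 S₂ (Finset.mem_filter.mp h₂).1 hsub
    have hchsubM : ch ⊆ M := fun N hN => (hchM N hN).1
    have hcover : ∀ S ∈ M.erase Δ, ∃ N ∈ ch, S ⊆ N := by
      intro S hS
      set F := (M.erase Δ).filter (fun X => S ⊆ X) with hF
      have hSF : S ∈ F := Finset.mem_filter.mpr ⟨hS, Finset.Subset.refl _⟩
      obtain ⟨N, hNF, hNmax⟩ := F.exists_max_image (fun X => X.card) ⟨S, hSF⟩
      obtain ⟨hNer, hSN⟩ := Finset.mem_filter.mp hNF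
      refine ⟨N, Finset.mem_filter.mpr ⟨hNer, ?_⟩, hSN⟩
      intro S₂ hS₂ hNS₂
      have hS₂F : S₂ ∈ F := Finset.mem_filter.mpr ⟨hS₂, hSN.trans hNS₂⟩
      exact Finset.eq_of_subset_of_card_le hNS₂ (hNmax S₂ hS₂F)
    have hchconds := hnested.2 ch hchsubM hchanti
    have hUcomp : IsCompleteSub Δ (ch.sup id) := hchconds.1
    have hUΔ : ch.sup id ⊆ Δ := hUcomp.1
    have hUmem : ∀ S ∈ M.erase Δ, S ⊆ ch.sup id := by
      intro S hS
      obtain ⟨N, hN, hSN⟩ := hcover S hS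
      exact hSN.trans (subset_sup hN)
    have hindep : Indep ch := antichain_indep h0 hnested hchsubM hchanti
    -- Step 3 : an element outside the span of the union of children
    obtain ⟨α, hαΔ, hαU⟩ : ∃ α ∈ Δ, α ∉ spn (ch.sup id) := by
      by_contra hcon
      push_neg at hcon
      have hΔU : Δ ⊆ ch.sup id := fun β hβ => hUcomp.2 β hβ (hcon β hβ)
      obtain ⟨N, hN, hΔN⟩ := hchconds.2.2 Δ hΔU hirr
      exact (hchM N hN).2 (Finset.Subset.antisymm (hsubΔ N (hchM N hN).1) hΔN)
    -- Step 4 : the completion A of U ∪ {α}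
    set A : Finset V := Δ.filter (fun β => β ∈ spn (ch.sup id) ⊔ Submodule.span ℝ {α})
      with hA
    have hUA : ch.sup id ⊆ A := fun x hx => Finset.mem_filter.mpr
      ⟨hUΔ hx, Submodule.mem_sup_left (mem_spn_of_mem hx)⟩
    have hαA : α ∈ A := Finset.mem_filter.mpr
      ⟨hαΔ, Submodule.mem_sup_right (Submodule.mem_span_singleton_self α)⟩
    have hAΔ : A ⊆ Δ := Finset.filter_subset _ _
    have hAspan : spn A = spn (ch.sup id) ⊔ Submodule.span ℝ {α} := by
      apply le_antisymm
      · rw [Submodule.span_le]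
        intro x hx
        exact (Finset.mem_filter.mp (by exact_mod_cast hx)).2
      · refine sup_le (spn_mono hUA) ?_
        rw [Submodule.span_le]
        intro x hx
        rw [Set.mem_singleton_iff] at hx
        subst hx
        exact mem_spn_of_mem hαA
    have hα0 : α ≠ 0 := fun h => h0 (h ▸ hαΔ)
    have hAd : Module.finrank ℝ (spn A) = Module.finrank ℝ (spn (ch.sup id)) + 1 := by
      have hdisj : Disjoint (spn (ch.sup id)) (Submodule.span ℝ {α}) :=
        (Submodule.disjoint_span_singleton).mpr (fun h => absurd h hαU)
      have h5 := Submodule.finrank_sup_add_finrank_inf_eq (spn (ch.sup id))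
        (Submodule.span ℝ {α})
      rw [hdisj.eq_bot, finrank_bot, add_zero, finrank_span_singleton hα0] at h5
      rw [hAspan, h5]
    have hAr : Module.finrank ℝ (spn A) ≤ Module.finrank ℝ (spn Δ) :=
      Submodule.finrank_mono (spn_mono hAΔ)
    have hAcomp : IsCompleteSub Δ A := by
      refine ⟨hAΔ, fun β hβ hsp => Finset.mem_filter.mpr ⟨hβ, ?_⟩⟩
      rw [← hAspan]
      exact hsp
    -- Step 5 : finrank (spn U) + 1 = finrank (spn Δ)
    have hUr : Module.finrank ℝ (spn (ch.sup id)) + 1 = Module.finrank ℝ (spn Δ) := by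
      by_contra hne'
      have hlt : Module.finrank ℝ (spn A) < Module.finrank ℝ (spn Δ) := by omega
      have hAneΔ : Δ ≠ A := by
        intro h
        rw [h] at hlt
        exact lt_irrefl _ hlt
      obtain ⟨𝒞A, hsupA, hirrA, hindA⟩ := exists_components Δ h0 A.card A le_rfl hAcomp
      have hα𝒞 : α ∈ 𝒞A.sup id := by rw [hsupA]; exact hαA
      obtain ⟨S', hS'𝒞, hαS'⟩ := Finset.mem_sup.mp hα𝒞
      have hS'irr : IsIrreducibleSub Δ S' := hirrA S' hS'𝒞
      have hS'A : S' ⊆ A := by rw [← hsupA]; exact subset_sup hS'𝒞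
      have hS'Δ : S' ⊆ Δ := hS'irr.1.1
      have hS'neΔ : S' ≠ Δ := fun h => hAneΔ (Finset.Subset.antisymm (h ▸ hS'A) hAΔ)
      have hS'notM : S' ∉ M := by
        intro hmem'
        have hS'er : S' ∈ M.erase Δ := Finset.mem_erase.mpr ⟨hS'neΔ, hmem'⟩
        exact hαU (mem_spn_of_mem ((hUmem S' hS'er) hαS'))
      have hnew : IsNestedSub Δ (insert S' M) := by
        constructor
        · intro S hS
          rcases Finset.mem_insert.mp hS with rfl | hS
          · exact hS'irr
          · exact hnested.1 S hS
        · intro T hT hanti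
          by_cases hS'T : S' ∈ T
          · have hTM' : ∀ S ∈ T, S = S' ∨ S ∈ M := fun S hS =>
              (Finset.mem_insert.mp (hT hS))
            have hΔnotT : Δ ∉ T := fun hΔT =>
              hS'neΔ (hanti S' hS'T Δ hΔT hS'Δ)
            refine assemble Δ h0 𝒞A hindA (by rw [hsupA]; exact hAcomp) T ?_ ?_ ?_
            · intro S hS
              rcases hTM' S hS with rfl | h
              · exact hS'irr.2.1
              · exact (hnested.1 S h).2.1
            · intro S hS
              rcases hTM' S hS with rfl | h
              · exact ⟨S, hS'𝒞, Finset.Subset.refl _⟩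
              · have hSer : S ∈ M.erase Δ := Finset.mem_erase.mpr
                  ⟨fun he => hΔnotT (he ▸ hS), h⟩
                have hSA : S ⊆ 𝒞A.sup id := by
                  rw [hsupA]
                  exact (hUmem S hSer).trans hUA
                exact splitElem hindA (hnested.1 S h).2.1 (hnested.1 S h).2.2 hSA
            · intro C hC
              by_cases hS'C : S' ⊆ C
              · have hCeq : C = S' := by
                  by_contra hne''
                  exact false_of_nonempty_le_disjoint h0 hS'Δ hS'irr.2.1
                    (spn_mono hS'C) le_rfl (hindA.pair hC hS'𝒞 hne'')
                rw [hCeq]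
                have hfil : T.filter (· ⊆ S') = {S'} := by
                  apply Finset.eq_singleton_iff_unique_mem.mpr
                  refine ⟨Finset.mem_filter.mpr ⟨hS'T, Finset.Subset.refl _⟩, ?_⟩
                  intro x hx
                  obtain ⟨hxT, hxS'⟩ := Finset.mem_filter.mp hx
                  exact hanti x hxT S' hS'T hxS'
                rw [hfil, Finset.sup_singleton]
                refine ⟨hS'irr.1, ?_, ?_⟩
                · intro S hS S'' h1 h2 _
                  rw [Finset.mem_singleton] at hS; subst hS
                  exact Finset.Subset.antisymm h2 h1
                · intro S'' h1 _
                  exact ⟨S', Finset.mem_singleton_self _, h1⟩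
              · have hTCM : T.filter (· ⊆ C) ⊆ M := by
                  intro x hx
                  obtain ⟨hxT, hxC⟩ := Finset.mem_filter.mp hx
                  rcases hTM' x hxT with rfl | h
                  · exact absurd hxC hS'C
                  · exact h
                refine hnested.2 _ hTCM ?_
                intro S₁ h₁ S₂ h₂ h₁₂
                exact hanti S₁ (Finset.mem_filter.mp h₁).1 S₂ (Finset.mem_filter.mp h₂).1 h₁₂
          · refine hnested.2 T ?_ hanti
            intro S hS
            rcases Finset.mem_insert.mp (hT hS) with rfl | h
            · exact absurd hS hS'T
            · exact h
      have heq := hmax _ hnew (Finset.subset_insert _ _)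
      apply hS'notM
      rw [← heq]
      exact Finset.mem_insert_self _ _
    -- Step 6 : induction on each child
    have hIH : ∀ N ∈ ch, (M.filter (· ⊆ N)).card = Module.finrank ℝ (spn N) := by
      intro N hN
      obtain ⟨hNM, hNneΔ⟩ := hchM N hN
      have hNc : IsCompleteSub Δ N := (hnested.1 N hNM).1
      have hNΔ : N ⊆ Δ := hNc.1
      have h0N : (0 : V) ∉ N := fun h => h0 (hNΔ h)
      have hNcard : N.card ≤ n := by
        have hlt : N.card < Δ.card :=
          Finset.card_lt_card (Finset.ssubset_iff_subset_ne.mpr ⟨hNΔ, hNneΔ⟩)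
        omega
      have hirrN : IsIrreducibleSub N N :=
        (irr_iff hNc (Finset.Subset.refl N)).mpr (hnested.1 N hNM)
      have hMNnested : IsNestedSub N (M.filter (· ⊆ N)) := by
        constructor
        · intro S hS
          obtain ⟨hSM, hSN⟩ := Finset.mem_filter.mp hS
          exact (irr_iff hNc hSN).mpr (hnested.1 S hSM)
        · intro T hT hanti
          have hTM : T ⊆ M := hT.trans (Finset.filter_subset _ _)
          have hTsubN : T.sup id ⊆ N := sup_subset_of_forall fun S hS =>
            (Finset.mem_filter.mp (hT hS)).2
          obtain ⟨h1, h2, h3⟩ := hnested.2 T hTM hanti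
          refine ⟨complete_sub_of_complete hNΔ hTsubN h1, ?_, ?_⟩
          · intro S hS S' hss hsup hirr'
            exact h2 S hS S' hss hsup ((irr_iff hNc (hsup.trans hTsubN)).mp hirr')
          · intro S' hsup hirr'
            exact h3 S' hsup ((irr_iff hNc (hsup.trans hTsubN)).mp hirr')
      have hMNmax : ∀ M', IsNestedSub N M' → M.filter (· ⊆ N) ⊆ M' →
          M' = M.filter (· ⊆ N) := by
        intro M' hM' hsub
        have hM'N : ∀ S ∈ M', S ⊆ N := fun S hS => (hM'.1 S hS).1.1
        have hM'irrΔ : ∀ S ∈ M', IsIrreducibleSub Δ S := fun S hS =>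
          (irr_iff hNc (hM'N S hS)).mp (hM'.1 S hS)
        have hM''cases : ∀ S ∈ (M \ M.filter (· ⊆ N)) ∪ M',
            (S ∈ M ∧ ¬ S ⊆ N) ∨ S ∈ M' := by
          intro S hS
          rcases Finset.mem_union.mp hS with h | h
          · obtain ⟨h1, h2⟩ := Finset.mem_sdiff.mp h
            by_cases hsn : S ⊆ N
            · exact (h2 (Finset.mem_filter.mpr ⟨h1, hsn⟩)).elim
            · exact Or.inl ⟨h1, hsn⟩
          · exact Or.inr h
        have hM''nested : IsNestedSub Δ ((M \ M.filter (· ⊆ N)) ∪ M') := by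
          constructor
          · intro S hS
            rcases hM''cases S hS with ⟨h1, _⟩ | h
            · exact hnested.1 S h1
            · exact hM'irrΔ S h
          · intro T hT hanti
            by_cases hΔT : Δ ∈ T
            · have hTeq : T = {Δ} := by
                apply Finset.eq_singleton_iff_unique_mem.mpr
                refine ⟨hΔT, fun S hS => ?_⟩
                have hSsubΔ : S ⊆ Δ := by
                  rcases hM''cases S (hT hS) with ⟨h1, _⟩ | h
                  · exact hsubΔ S h1
                  · exact (hM'N S h).trans hNΔ
                exact hanti S hS Δ hΔT hSsubΔ
              rw [hTeq]
              exact top_antichain_conds Δ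
            · refine assemble Δ h0 ch hindep hUcomp T ?_ ?_ ?_
              · intro S hS
                rcases hM''cases S (hT hS) with ⟨h1, _⟩ | h
                · exact (hnested.1 S h1).2.1
                · exact (hM'.1 S h).2.1
              · intro S hS
                rcases hM''cases S (hT hS) with ⟨h1, _⟩ | h
                · exact hcover S (Finset.mem_erase.mpr ⟨fun he => hΔT (he ▸ hS), h1⟩)
                · exact ⟨N, hN, hM'N S h⟩
              · intro C hC
                by_cases hCN : C = N
                · subst hCN
                  have hTC_M' : T.filter (· ⊆ C) ⊆ M' := by
                    intro x hx
                    obtain ⟨hxT, hxC⟩ := Finset.mem_filter.mp hx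
                    rcases hM''cases x (hT hxT) with ⟨_, h2⟩ | h
                    · exact absurd hxC h2
                    · exact h
                  have hanti' : ∀ S₁ ∈ T.filter (· ⊆ C), ∀ S₂ ∈ T.filter (· ⊆ C),
                      S₁ ⊆ S₂ → S₁ = S₂ := fun S₁ h₁ S₂ h₂ h₁₂ =>
                    hanti S₁ (Finset.mem_filter.mp h₁).1 S₂ (Finset.mem_filter.mp h₂).1 h₁₂
                  obtain ⟨h1, h2, h3⟩ := hM'.2 _ hTC_M' hanti'
                  have hsupN : (T.filter (· ⊆ C)).sup id ⊆ C :=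
                    sup_subset_of_forall fun S hS => (Finset.mem_filter.mp hS).2
                  refine ⟨complete_of_complete_sub hNc hsupN h1, ?_, ?_⟩
                  · intro S hS S'' hss hsup hirr'
                    exact h2 S hS S'' hss hsup ((irr_iff hNc (hsup.trans hsupN)).mpr hirr')
                  · intro S'' hsup hirr'
                    exact h3 S'' hsup ((irr_iff hNc (hsup.trans hsupN)).mpr hirr')
                · have hTC_M : T.filter (· ⊆ C) ⊆ M := by
                    intro x hx
                    obtain ⟨hxT, hxC⟩ := Finset.mem_filter.mp hx
                    rcases hM''cases x (hT hxT) with ⟨h1, _⟩ | h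
                    · exact h1
                    · exfalso
                      exact false_of_nonempty_le_disjoint h0 ((hM'irrΔ x h).1.1)
                        ((hM'.1 x h).2.1) (spn_mono hxC) (spn_mono (hM'N x h))
                        (hindep.pair hC hN hCN)
                  refine hnested.2 _ hTC_M ?_
                  intro S₁ h₁ S₂ h₂ h₁₂
                  exact hanti S₁ (Finset.mem_filter.mp h₁).1 S₂
                    (Finset.mem_filter.mp h₂).1 h₁₂
        have hMM'' : M ⊆ (M \ M.filter (· ⊆ N)) ∪ M' := by
          intro S hS
          by_cases hsn : S ∈ M.filter (· ⊆ N)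
          · exact Finset.mem_union_right _ (hsub hsn)
          · exact Finset.mem_union_left _ (Finset.mem_sdiff.mpr ⟨hS, hsn⟩)
        have hM''eq := hmax _ hM''nested hMM''
        apply Finset.Subset.antisymm ?_ hsub
        intro S hS
        have hSM : S ∈ M := by
          rw [← hM''eq]
          exact Finset.mem_union_right _ hS
        exact Finset.mem_filter.mpr ⟨hSM, hM'N S hS⟩
      exact IH N hNcard h0N hirrN (M.filter (· ⊆ N)) hMNnested hMNmax
    -- Step 7 : counting
    have hpart : M.erase Δ = ch.biUnion (fun N => M.filter (· ⊆ N)) := by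
      apply Finset.Subset.antisymm
      · intro S hS
        obtain ⟨N, hN, hSN⟩ := hcover S hS
        exact Finset.mem_biUnion.mpr
          ⟨N, hN, Finset.mem_filter.mpr ⟨Finset.mem_of_mem_erase hS, hSN⟩⟩
      · intro S hS
        obtain ⟨N, hN, hSf⟩ := Finset.mem_biUnion.mp hS
        obtain ⟨hSM, hSN⟩ := Finset.mem_filter.mp hSf
        refine Finset.mem_erase.mpr ⟨?_, hSM⟩
        rintro rfl
        exact (hchM N hN).2 (Finset.Subset.antisymm (hsubΔ N (hchM N hN).1) hSN)
    have hdisjf : ∀ N₁ ∈ ch, ∀ N₂ ∈ ch, N₁ ≠ N₂ →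
        Disjoint (M.filter (· ⊆ N₁)) (M.filter (· ⊆ N₂)) := by
      intro N₁ h₁ N₂ h₂ hne'
      rw [Finset.disjoint_left]
      intro S hS1 hS2
      obtain ⟨hSM, hSN₁⟩ := Finset.mem_filter.mp hS1
      obtain ⟨-, hSN₂⟩ := Finset.mem_filter.mp hS2
      exact false_of_nonempty_le_disjoint h0 (hsubΔ S hSM) ((hnested.1 S hSM).2.1)
        (spn_mono hSN₁) (spn_mono hSN₂) (hindep.pair h₁ h₂ hne')
    have hcount : M.card = ∑ N ∈ ch, (M.filter (· ⊆ N)).card + 1 := by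
      rw [← Finset.card_biUnion hdisjf, ← hpart, Finset.card_erase_of_mem hΔM]
      have hpos : 1 ≤ M.card := Finset.card_pos.mpr ⟨Δ, hΔM⟩
      omega
    rw [hcount]
    have hsum : ∑ N ∈ ch, (M.filter (· ⊆ N)).card = ∑ N ∈ ch, Module.finrank ℝ (spn N) :=
      Finset.sum_congr rfl fun N hN => hIH N hN
    rw [hsum, ← finrank_sup_of_indep ch hindep]
    exact hUr

/-- **A maximal nested set has exactly `r` elements**: if the irreducible
configuration `Δ` spans the `r`-dimensional space `V` and `M` is a nested
collection of irreducible subsets of `Δ` that is maximal with respect to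
inclusion, then `|M| = r`. -/
theorem card_maximal_nested_set [FiniteDimensional ℝ V] {r : ℕ}
    (Δ : Finset V) (h0 : (0 : V) ∉ Δ)
    (hspan : Submodule.span ℝ (Δ : Set V) = ⊤)
    (hrank : Module.finrank ℝ V = r)
    (hirr : IsIrreducibleSub Δ Δ)
    (M : Finset (Finset V))
    (hnested : IsNestedSub Δ M)
    (hmax : ∀ M' : Finset (Finset V), IsNestedSub Δ M' → M ⊆ M' → M' = M) :
    M.card = r := by
  have h := main_aux Δ.card Δ le_rfl h0 hirr M hnested hmax
  rw [h, show spn Δ = ⊤ from hspan, finrank_top, hrank]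
end

section
/- For A_{r−1} realized as above, a collection of irreducible subsets indexed by subsets S_1,…,S_k ⊆ {1,…,r} is nested if and only if the family {S_1,…,S_k} is laminar: for any two members S_i, S_j, either S_i ∩ S_j = ∅, or S_i ⊆ S_j, or S_j ⊆ S_i. -/
/- DeConcini-Procesi complete, irreducible and nested subsets of a finite
vector configuration `Δ` (the set of positive roots) in a real vector space. -/

open scoped BigOperators

variable {V : Type*} [AddCommGroup V] [Module ℝ V] [DecidableEq V]

/-- `e^i - e^j` as a vector of `ℝ^r`. -/
def eij {r : ℕ} (i j : Fin r) : Fin r → ℝ :=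
  fun t => (if t = i then 1 else 0) - (if t = j then 1 else 0)

/-- The positive roots of `A_{r-1}`: `e^i - e^j`, `1 ≤ i < j ≤ r`. -/
noncomputable def rootsAr (r : ℕ) : Finset (Fin r → ℝ) :=
  (Finset.univ.filter fun p : Fin r × Fin r => p.1 < p.2).image
    fun p => eij p.1 p.2

/-- The irreducible subset `{ e^i - e^j : i, j ∈ S, i < j }` of the roots of
`A_{r-1}` attached to a subset `S ⊆ {1, …, r}`. -/
noncomputable def rootsOfSubset {r : ℕ} (S : Finset (Fin r)) : Finset (Fin r → ℝ) :=
  (Finset.univ.filter fun p : Fin r × Fin r => p.1 ∈ S ∧ p.2 ∈ S ∧ p.1 < p.2).image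
    fun p => eij p.1 p.2

section TypeA

variable {r : ℕ}

lemma eij_apply (i j t : Fin r) :
    eij i j t = (if t = i then 1 else 0) - (if t = j then 1 else 0) := rfl

lemma eij_apply_self {i j : Fin r} (h : i ≠ j) : eij i j i = 1 := by
  simp [eij_apply, h, Ne.symm h]

lemma eij_ne_zero {i j : Fin r} (h : i ≠ j) : eij i j ≠ 0 := by
  intro h0
  have := congrFun h0 i
  rw [eij_apply_self h] at this
  simpa using this

lemma eij_add (a b c : Fin r) : eij a b + eij b c = eij a c := by
  funext t; simp [eij_apply]

lemma eij_neg (a b : Fin r) : eij b a = - eij a b := by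
  funext t; simp [eij_apply]

lemma eij_inj {a b c d : Fin r} (hab : a < b) (hcd : c < d)
    (h : eij a b = eij c d) : a = c ∧ b = d := by
  have h1 := congrFun h a
  have hac : a = c := by
    by_contra hac
    by_cases had : a = d
    · subst had
      simp only [eij_apply, if_pos rfl, if_neg hab.ne, if_neg hac, if_neg hcd.ne'] at h1
      by_cases hdb : a = b <;> simp [hdb] at h1 <;> norm_num at h1
    · simp [eij_apply, hab.ne, hac, had] at h1
  subst hac
  have h2 := congrFun h d
  have hda : d ≠ a := hcd.ne'
  have hbd : d = b := by simpa [eij_apply, hda] using h2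
  exact ⟨rfl, hbd.symm⟩

lemma mem_rootsOfSubset {x : Fin r → ℝ} {S : Finset (Fin r)} :
    x ∈ rootsOfSubset S ↔ ∃ a b : Fin r, a ∈ S ∧ b ∈ S ∧ a < b ∧ x = eij a b := by
  simp only [rootsOfSubset, Finset.mem_image, Finset.mem_filter, Finset.mem_univ, true_and]
  constructor
  · rintro ⟨⟨a, b⟩, ⟨ha, hb, hlt⟩, rfl⟩; exact ⟨a, b, ha, hb, hlt, rfl⟩
  · rintro ⟨a, b, ha, hb, hlt, rfl⟩; exact ⟨⟨a, b⟩, ⟨ha, hb, hlt⟩, rfl⟩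

lemma eij_mem_rootsOfSubset {a b : Fin r} {S : Finset (Fin r)} (hab : a < b) :
    eij a b ∈ rootsOfSubset S ↔ a ∈ S ∧ b ∈ S := by
  rw [mem_rootsOfSubset]
  constructor
  · rintro ⟨c, d, hc, hd, hcd, h⟩
    obtain ⟨rfl, rfl⟩ := eij_inj hab hcd h
    exact ⟨hc, hd⟩
  · rintro ⟨ha, hb⟩; exact ⟨a, b, ha, hb, hab, rfl⟩

lemma mem_rootsAr {x : Fin r → ℝ} :
    x ∈ rootsAr r ↔ ∃ a b : Fin r, a < b ∧ x = eij a b := by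
  simp only [rootsAr, Finset.mem_image, Finset.mem_filter, Finset.mem_univ, true_and]
  constructor
  · rintro ⟨⟨a, b⟩, hlt, rfl⟩; exact ⟨a, b, hlt, rfl⟩
  · rintro ⟨a, b, hlt, rfl⟩; exact ⟨⟨a, b⟩, hlt, rfl⟩

lemma rootsOfSubset_subset_rootsAr (S : Finset (Fin r)) :
    rootsOfSubset S ⊆ rootsAr r := by
  intro x hx
  obtain ⟨a, b, _, _, hlt, rfl⟩ := mem_rootsOfSubset.mp hx
  exact mem_rootsAr.mpr ⟨a, b, hlt, rfl⟩

lemma rootsOfSubset_mono {S S' : Finset (Fin r)} (h : S ⊆ S') :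
    rootsOfSubset S ⊆ rootsOfSubset S' := by
  intro x hx
  obtain ⟨a, b, ha, hb, hlt, rfl⟩ := mem_rootsOfSubset.mp hx
  exact mem_rootsOfSubset.mpr ⟨a, b, h ha, h hb, hlt, rfl⟩

lemma exists_pair_of_two_le_card {S : Finset (Fin r)} (h2 : 2 ≤ S.card) :
    ∃ a ∈ S, ∃ b ∈ S, a < b := by
  obtain ⟨a, ha, b, hb, hne⟩ := Finset.one_lt_card.mp h2
  rcases lt_or_gt_of_ne hne with h | h
  · exact ⟨a, ha, b, hb, h⟩
  · exact ⟨b, hb, a, ha, h⟩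

lemma subset_of_rootsOfSubset_subset {S S' : Finset (Fin r)} (h2 : 2 ≤ S.card)
    (h : rootsOfSubset S ⊆ rootsOfSubset S') : S ⊆ S' := by
  intro a ha
  obtain ⟨b, hb, hne⟩ := Finset.exists_mem_ne h2 a
  rcases lt_or_gt_of_ne hne with hlt | hlt
  · have := h (eij_mem_rootsOfSubset hlt |>.mpr ⟨hb, ha⟩)
    exact ((eij_mem_rootsOfSubset hlt).mp this).2
  · have := h (eij_mem_rootsOfSubset hlt |>.mpr ⟨ha, hb⟩)
    exact ((eij_mem_rootsOfSubset hlt).mp this).1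

/-- If every element of `X` has `t`-coordinate `0`, so does every element of its span. -/
lemma span_apply_eq_zero {X : Finset (Fin r → ℝ)} {t : Fin r}
    (h : ∀ x ∈ X, x t = 0) {y : Fin r → ℝ}
    (hy : y ∈ Submodule.span ℝ (X : Set (Fin r → ℝ))) : y t = 0 := by
  have : Submodule.span ℝ (X : Set (Fin r → ℝ)) ≤
      LinearMap.ker (LinearMap.proj t : (Fin r → ℝ) →ₗ[ℝ] ℝ) := by
    rw [Submodule.span_le]
    intro x hx
    simpa using h x hx
  simpa using this hy

/-- If every element of `X` has coordinate sum `0` over `A`, so does every element of its span. -/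
lemma span_sum_eq_zero {X : Finset (Fin r → ℝ)} {A : Finset (Fin r)}
    (h : ∀ x ∈ X, ∑ t ∈ A, x t = 0) {y : Fin r → ℝ}
    (hy : y ∈ Submodule.span ℝ (X : Set (Fin r → ℝ))) : ∑ t ∈ A, y t = 0 := by
  have : Submodule.span ℝ (X : Set (Fin r → ℝ)) ≤
      LinearMap.ker (∑ t ∈ A, (LinearMap.proj t : (Fin r → ℝ) →ₗ[ℝ] ℝ)) := by
    rw [Submodule.span_le]
    intro x hx
    simpa [LinearMap.sum_apply] using h x hx
  have := this hy
  simpa [LinearMap.sum_apply] using this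

lemma sum_eij (a b : Fin r) (A : Finset (Fin r)) :
    ∑ t ∈ A, eij a b t =
      (if a ∈ A then (1:ℝ) else 0) - (if b ∈ A then (1:ℝ) else 0) := by
  simp only [eij_apply, Finset.sum_sub_distrib, Finset.sum_ite_eq', Finset.sum_boole]

/-- Any edge inside `S` (in either orientation, or degenerate) lies in the span. -/
lemma eij_mem_span {a b : Fin r} {S : Finset (Fin r)} (ha : a ∈ S) (hb : b ∈ S) :
    eij a b ∈ Submodule.span ℝ ((rootsOfSubset S : Set (Fin r → ℝ))) := by
  rcases lt_trichotomy a b with h | h | h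
  · exact Submodule.subset_span (by exact_mod_cast (eij_mem_rootsOfSubset h).mpr ⟨ha, hb⟩)
  · subst h
    have : eij a a = 0 := by funext t; simp [eij_apply]
    rw [this]; exact Submodule.zero_mem _
  · rw [eij_neg]
    exact Submodule.neg_mem _
      (Submodule.subset_span (by exact_mod_cast (eij_mem_rootsOfSubset h).mpr ⟨hb, ha⟩))

lemma coord_zero_of_not_mem {a : Fin r} {S : Finset (Fin r)} (ha : a ∉ S) :
    ∀ x ∈ rootsOfSubset S, x a = 0 := by
  intro x hx
  obtain ⟨c, d, hc, hd, _, rfl⟩ := mem_rootsOfSubset.mp hx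
  have hca : a ≠ c := fun h => ha (h ▸ hc)
  have hda : a ≠ d := fun h => ha (h ▸ hd)
  simp [eij_apply, hca, hda]

lemma rootsOfSubset_complete (S : Finset (Fin r)) :
    IsCompleteSub (rootsAr r) (rootsOfSubset S) := by
  refine ⟨rootsOfSubset_subset_rootsAr S, ?_⟩
  intro α hα hspan
  obtain ⟨a, b, hab, rfl⟩ := mem_rootsAr.mp hα
  have ha : a ∈ S := by
    by_contra ha
    have := span_apply_eq_zero (coord_zero_of_not_mem ha) hspan
    rw [eij_apply_self hab.ne] at this
    norm_num at this
  have hb : b ∈ S := by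
    by_contra hb
    have := span_apply_eq_zero (coord_zero_of_not_mem hb) hspan
    simp [eij_apply, hab.ne'] at this
  exact (eij_mem_rootsOfSubset hab).mpr ⟨ha, hb⟩

lemma disjoint_span_eq_zero {P Q : Submodule ℝ (Fin r → ℝ)} (h : Disjoint P Q)
    {x : Fin r → ℝ} (hP : x ∈ P) (hQ : x ∈ Q) : x = 0 :=
  Submodule.disjoint_def.mp h x hP hQ

/-- `rootsOfSubset S` is indecomposable. -/
lemma rootsOfSubset_indec {S : Finset (Fin r)} (h2 : 2 ≤ S.card) :
    ¬ ∃ S₁ S₂ : Finset (Fin r → ℝ), S₁.Nonempty ∧ S₂.Nonempty ∧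
      S₁ ∪ S₂ = rootsOfSubset S ∧
      Disjoint (Submodule.span ℝ (S₁ : Set (Fin r → ℝ)))
        (Submodule.span ℝ (S₂ : Set (Fin r → ℝ))) := by
  rintro ⟨S₁, S₂, ⟨x, hx⟩, ⟨y, hy⟩, hun, hdis⟩
  set V₁ := Submodule.span ℝ (S₁ : Set (Fin r → ℝ)) with hV₁
  set V₂ := Submodule.span ℝ (S₂ : Set (Fin r → ℝ)) with hV₂
  have hS₁ : S₁ ⊆ rootsOfSubset S := hun ▸ Finset.subset_union_left
  have hS₂ : S₂ ⊆ rootsOfSubset S := hun ▸ Finset.subset_union_right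
  -- every edge of S lies in V₁ or V₂
  have edge_mem : ∀ u ∈ S, ∀ v ∈ S, u ≠ v → eij u v ∈ V₁ ∨ eij u v ∈ V₂ := by
    intro u hu v hv huv
    have H : ∀ a b : Fin r, a < b → a ∈ S → b ∈ S → eij a b ∈ V₁ ∨ eij a b ∈ V₂ := by
      intro a b hab ha hb
      have : eij a b ∈ S₁ ∪ S₂ := hun ▸ (eij_mem_rootsOfSubset hab).mpr ⟨ha, hb⟩
      rcases Finset.mem_union.mp this with h | h
      · exact Or.inl (Submodule.subset_span h)
      · exact Or.inr (Submodule.subset_span h)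
    rcases lt_or_gt_of_ne huv with h | h
    · exact H u v h hu hv
    · rcases H v u h hv hu with h' | h'
      · exact Or.inl (by rw [eij_neg]; exact Submodule.neg_mem _ h')
      · exact Or.inr (by rw [eij_neg]; exact Submodule.neg_mem _ h')
  have not_both : ∀ u v : Fin r, u ≠ v → eij u v ∈ V₁ → eij u v ∈ V₂ → False := by
    intro u v huv h1 h2
    exact eij_ne_zero huv (disjoint_span_eq_zero hdis h1 h2)
  obtain ⟨a, b, ha, hb, hab, rfl⟩ := mem_rootsOfSubset.mp (hS₁ hx)
  obtain ⟨c, d, hc, hd, hcd, rfl⟩ := mem_rootsOfSubset.mp (hS₂ hy)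
  have hxV₁ : eij a b ∈ V₁ := Submodule.subset_span hx
  have hyV₂ : eij c d ∈ V₂ := Submodule.subset_span hy
  -- all edges from a are in V₁
  have claimA : ∀ t ∈ S, t ≠ a → eij a t ∈ V₁ := by
    intro t ht hta
    by_cases htb : t = b
    · subst htb; exact hxV₁
    · rcases edge_mem a ha t ht (Ne.symm hta) with h | h
      · exact h
      · rcases edge_mem b hb t ht (fun h' => htb h'.symm) with h' | h'
        · exfalso
          have : eij a t ∈ V₁ := by
            rw [← eij_add a b t]; exact Submodule.add_mem _ hxV₁ h'
          exact not_both a t (Ne.symm hta) this h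
        · exfalso
          have : eij a b ∈ V₂ := by
            have := Submodule.sub_mem _ h h'
            rw [show eij a t - eij b t = eij a b by rw [← eij_add a b t]; abel] at this
            exact this
          exact not_both a b hab.ne hxV₁ this
  have claimB : ∀ t ∈ S, t ≠ c → eij c t ∈ V₂ := by
    intro t ht htc
    by_cases htd : t = d
    · subst htd; exact hyV₂
    · rcases edge_mem c hc t ht (Ne.symm htc) with h | h
      swap
      · exact h
      · rcases edge_mem d hd t ht (fun h' => htd h'.symm) with h' | h'
        · exfalso
          have : eij c d ∈ V₁ := by
            have := Submodule.sub_mem _ h h'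
            rw [show eij c t - eij d t = eij c d by rw [← eij_add c d t]; abel] at this
            exact this
          exact not_both c d hcd.ne this hyV₂
        · exfalso
          have : eij c t ∈ V₂ := by
            rw [← eij_add c d t]; exact Submodule.add_mem _ hyV₂ h'
          exact not_both c t (Ne.symm htc) h this
  by_cases hac : a = c
  · subst hac
    have h1 : eij a d ∈ V₁ := claimA d hd hcd.ne'
    exact not_both a d hcd.ne h1 hyV₂
  · have h1 : eij a c ∈ V₁ := claimA c hc (Ne.symm hac)
    have h2 : eij a c ∈ V₂ := by
      rw [show eij a c = -eij c a by rw [eij_neg]]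
      exact Submodule.neg_mem _ (claimB a ha hac)
    exact not_both a c hac h1 h2

section Union
variable {𝒯 : Finset (Finset (Fin r))}

lemma mem_sup_roots {x : Fin r → ℝ} :
    x ∈ 𝒯.sup rootsOfSubset ↔ ∃ S ∈ 𝒯, x ∈ rootsOfSubset S := Finset.mem_sup

/-- In the span of a disjoint union of cliques, any root has both endpoints
in a single clique. -/
lemma span_component (hdisj : ∀ A ∈ 𝒯, ∀ B ∈ 𝒯, A ≠ B → A ∩ B = ∅)
    {a b : Fin r} (hab : a ≠ b)
    (h : eij a b ∈ Submodule.span ℝ ((𝒯.sup rootsOfSubset : Finset (Fin r → ℝ)) : Set (Fin r → ℝ))) :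
    ∃ S ∈ 𝒯, a ∈ S ∧ b ∈ S := by
  -- a belongs to some member
  have ha : ∃ S ∈ 𝒯, a ∈ S := by
    by_contra hcon
    push_neg at hcon
    have hz : ∀ x ∈ 𝒯.sup rootsOfSubset, x a = 0 := by
      intro x hx
      obtain ⟨S, hS, hxS⟩ := mem_sup_roots.mp hx
      exact coord_zero_of_not_mem (hcon S hS) x hxS
    have := span_apply_eq_zero hz h
    rw [eij_apply_self hab] at this
    norm_num at this
  obtain ⟨S, hS, haS⟩ := ha
  refine ⟨S, hS, haS, ?_⟩
  have hz : ∀ x ∈ 𝒯.sup rootsOfSubset, ∑ t ∈ S, x t = 0 := by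
    intro x hx
    obtain ⟨S', hS', hxS'⟩ := mem_sup_roots.mp hx
    obtain ⟨c, d, hc, hd, _, rfl⟩ := mem_rootsOfSubset.mp hxS'
    rw [sum_eij]
    by_cases hSS : S' = S
    · subst hSS; simp [hc, hd]
    · have hint := hdisj S' hS' S hS hSS
      have hcS : c ∉ S := fun hcS => by
        have : c ∈ S' ∩ S := Finset.mem_inter.mpr ⟨hc, hcS⟩
        rw [hint] at this; exact absurd this (Finset.notMem_empty c)
      have hdS : d ∉ S := fun hdS => by
        have : d ∈ S' ∩ S := Finset.mem_inter.mpr ⟨hd, hdS⟩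
        rw [hint] at this; exact absurd this (Finset.notMem_empty d)
      simp [hcS, hdS]
  have hsum := span_sum_eq_zero hz h
  rw [sum_eij] at hsum
  by_contra hbS
  simp [haS, hbS] at hsum
end Union

section Union2
variable {𝒯 : Finset (Finset (Fin r))}

lemma sup_complete (hdisj : ∀ A ∈ 𝒯, ∀ B ∈ 𝒯, A ≠ B → A ∩ B = ∅) :
    IsCompleteSub (rootsAr r) (𝒯.sup rootsOfSubset) := by
  constructor
  · intro x hx
    obtain ⟨S, _, hxS⟩ := mem_sup_roots.mp hx
    exact rootsOfSubset_subset_rootsAr S hxS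
  · intro α hα hspan
    obtain ⟨a, b, hab, rfl⟩ := mem_rootsAr.mp hα
    obtain ⟨S, hS, ha, hb⟩ := span_component hdisj hab.ne hspan
    exact mem_sup_roots.mpr ⟨S, hS, (eij_mem_rootsOfSubset hab).mpr ⟨ha, hb⟩⟩

/-- Any irreducible subset of a disjoint union of cliques is contained in one clique. -/
lemma irred_subset_component (hdisj : ∀ A ∈ 𝒯, ∀ B ∈ 𝒯, A ≠ B → A ∩ B = ∅)
    {S' : Finset (Fin r → ℝ)} (hsub : S' ⊆ 𝒯.sup rootsOfSubset)
    (hne : S'.Nonempty)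
    (hindec : ¬ ∃ S₁ S₂ : Finset (Fin r → ℝ), S₁.Nonempty ∧ S₂.Nonempty ∧
      S₁ ∪ S₂ = S' ∧ Disjoint (Submodule.span ℝ (S₁ : Set (Fin r → ℝ)))
        (Submodule.span ℝ (S₂ : Set (Fin r → ℝ)))) :
    ∃ S ∈ 𝒯, S' ⊆ rootsOfSubset S := by
  obtain ⟨x₀, hx₀⟩ := hne
  obtain ⟨S₀, hS₀, hx₀S₀⟩ := mem_sup_roots.mp (hsub hx₀)
  refine ⟨S₀, hS₀, ?_⟩
  by_contra hcon
  obtain ⟨y, hy, hyS₀⟩ := Finset.not_subset.mp hcon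
  set P₁ := S'.filter (· ∈ rootsOfSubset S₀) with hP₁
  set P₂ := S'.filter (· ∉ rootsOfSubset S₀) with hP₂
  apply hindec
  refine ⟨P₁, P₂, ⟨x₀, Finset.mem_filter.mpr ⟨hx₀, hx₀S₀⟩⟩,
    ⟨y, Finset.mem_filter.mpr ⟨hy, hyS₀⟩⟩, Finset.filter_union_filter_not_eq _ _, ?_⟩
  rw [Submodule.disjoint_def]
  intro z hz1 hz2
  funext t
  by_cases ht : t ∈ S₀
  · -- every element of P₂ vanishes on coordinates of S₀
    refine span_apply_eq_zero (t := t) ?_ hz2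
    intro x hx
    obtain ⟨hxS', hxn⟩ := Finset.mem_filter.mp hx
    obtain ⟨S₁, hS₁, hxS₁⟩ := mem_sup_roots.mp (hsub hxS')
    have hne' : S₁ ≠ S₀ := by
      rintro rfl; exact hxn hxS₁
    obtain ⟨c, d, hc, hd, _, rfl⟩ := mem_rootsOfSubset.mp hxS₁
    have hint := hdisj S₁ hS₁ S₀ hS₀ hne'
    have htc : t ≠ c := by
      rintro rfl
      have : t ∈ S₁ ∩ S₀ := Finset.mem_inter.mpr ⟨hc, ht⟩
      rw [hint] at this; exact absurd this (Finset.notMem_empty t)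
    have htd : t ≠ d := by
      rintro rfl
      have : t ∈ S₁ ∩ S₀ := Finset.mem_inter.mpr ⟨hd, ht⟩
      rw [hint] at this; exact absurd this (Finset.notMem_empty t)
    simp [eij_apply, htc, htd]
  · refine span_apply_eq_zero (t := t) ?_ hz1
    intro x hx
    obtain ⟨_, hxm⟩ := Finset.mem_filter.mp hx
    exact coord_zero_of_not_mem ht x hxm

end Union2

lemma rootsOfSubset_nonempty {S : Finset (Fin r)} (h2 : 2 ≤ S.card) :
    (rootsOfSubset S).Nonempty := by
  obtain ⟨a, ha, b, hb, hab⟩ := exists_pair_of_two_le_card h2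
  exact ⟨eij a b, (eij_mem_rootsOfSubset hab).mpr ⟨ha, hb⟩⟩

lemma core_incomplete {S₁ S₂ : Finset (Fin r)} {i j t : Fin r}
    (hi : i ∈ S₁) (hi2 : i ∉ S₂) (hj : j ∈ S₂) (hj2 : j ∉ S₁)
    (ht1 : t ∈ S₁) (ht2 : t ∈ S₂) (hij : i < j)
    (hcomp : IsCompleteSub (rootsAr r) (rootsOfSubset S₁ ∪ rootsOfSubset S₂)) :
    False := by
  have hαΔ : eij i j ∈ rootsAr r := mem_rootsAr.mpr ⟨i, j, hij, rfl⟩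
  have h1 : eij i t ∈ Submodule.span ℝ
      ((rootsOfSubset S₁ ∪ rootsOfSubset S₂ : Finset (Fin r → ℝ)) : Set (Fin r → ℝ)) := by
    refine Submodule.span_mono ?_ (eij_mem_span hi ht1)
    exact_mod_cast Finset.coe_subset.mpr Finset.subset_union_left
  have h2 : eij t j ∈ Submodule.span ℝ
      ((rootsOfSubset S₁ ∪ rootsOfSubset S₂ : Finset (Fin r → ℝ)) : Set (Fin r → ℝ)) := by
    refine Submodule.span_mono ?_ (eij_mem_span ht2 hj)
    exact_mod_cast Finset.coe_subset.mpr Finset.subset_union_right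
  have hspan : eij i j ∈ Submodule.span ℝ
      ((rootsOfSubset S₁ ∪ rootsOfSubset S₂ : Finset (Fin r → ℝ)) : Set (Fin r → ℝ)) := by
    rw [← eij_add i t j]
    exact Submodule.add_mem _ h1 h2
  have := hcomp.2 _ hαΔ hspan
  rcases Finset.mem_union.mp this with h | h
  · exact hj2 ((eij_mem_rootsOfSubset hij).mp h).2
  · exact hi2 ((eij_mem_rootsOfSubset hij).mp h).1


end TypeA

/-- **Nested collections in type `A` are the laminar families**: a collection
of irreducible subsets of `Δ⁺(A_{r-1})` indexed by subsets `S₁, …, S_k` of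
`{1, …, r}` (each of size at least `2`) is nested if and only if the family
`{S₁, …, S_k}` is laminar: any two members are disjoint or one contains the
other. -/
theorem nested_iff_laminar_typeA {r : ℕ} (𝒮 : Finset (Finset (Fin r)))
    (hcard : ∀ S ∈ 𝒮, 2 ≤ S.card) :
    IsNestedSub (rootsAr r) (𝒮.image rootsOfSubset) ↔
      ∀ S₁ ∈ 𝒮, ∀ S₂ ∈ 𝒮, S₁ ∩ S₂ = ∅ ∨ S₁ ⊆ S₂ ∨ S₂ ⊆ S₁ := by
  constructor
  · -- nested → laminar
    intro hN S₁ hS₁ S₂ hS₂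
    by_contra hcon
    push_neg at hcon
    obtain ⟨hint, hns₁, hns₂⟩ := hcon
    obtain ⟨t, ht⟩ := hint
    obtain ⟨ht1, ht2⟩ := Finset.mem_inter.mp ht
    obtain ⟨i, hi1, hi2⟩ := Finset.not_subset.mp hns₁
    obtain ⟨j, hj1, hj2⟩ := Finset.not_subset.mp hns₂
    set T : Finset (Finset (Fin r → ℝ)) := {rootsOfSubset S₁, rootsOfSubset S₂} with hTdef
    have hTsub : T ⊆ 𝒮.image rootsOfSubset := by
      intro A hA
      rcases Finset.mem_insert.mp hA with rfl | hA
      · exact Finset.mem_image.mpr ⟨S₁, hS₁, rfl⟩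
      · rw [Finset.mem_singleton] at hA
        subst hA
        exact Finset.mem_image.mpr ⟨S₂, hS₂, rfl⟩
    have hanti : ∀ A ∈ T, ∀ B ∈ T, A ⊆ B → A = B := by
      intro A hA B hB hAB
      rcases Finset.mem_insert.mp hA with rfl | hA
      · rcases Finset.mem_insert.mp hB with rfl | hB
        · rfl
        · rw [Finset.mem_singleton] at hB; subst hB
          exact absurd (subset_of_rootsOfSubset_subset (hcard S₁ hS₁) hAB) hns₁
      · rw [Finset.mem_singleton] at hA; subst hA
        rcases Finset.mem_insert.mp hB with rfl | hB
        · exact absurd (subset_of_rootsOfSubset_subset (hcard S₂ hS₂) hAB) hns₂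
        · rw [Finset.mem_singleton] at hB; subst hB; rfl
    obtain ⟨hcomp, -, -⟩ := hN.2 T hTsub hanti
    have hsup : T.sup id = rootsOfSubset S₁ ∪ rootsOfSubset S₂ := by
      simp [hTdef, Finset.sup_insert, Finset.sup_singleton, Finset.sup_eq_union]
    rw [hsup] at hcomp
    have hij : i ≠ j := fun h => hi2 (h ▸ hj1)
    rcases lt_or_gt_of_ne hij with h | h
    · exact core_incomplete hi1 hi2 hj1 hj2 ht1 ht2 h hcomp
    · rw [Finset.union_comm] at hcomp
      exact core_incomplete hj1 hj2 hi1 hi2 ht2 ht1 h hcomp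
  · -- laminar → nested
    intro hlam
    constructor
    · intro A hA
      obtain ⟨S, hS, rfl⟩ := Finset.mem_image.mp hA
      exact ⟨rootsOfSubset_complete S, rootsOfSubset_nonempty (hcard S hS),
        rootsOfSubset_indec (hcard S hS)⟩
    · intro T hT hanti
      set 𝒯 : Finset (Finset (Fin r)) := 𝒮.filter (fun S => rootsOfSubset S ∈ T) with h𝒯
      have hTeq : T = 𝒯.image rootsOfSubset := by
        apply Finset.Subset.antisymm
        · intro A hA
          obtain ⟨S, hS, rfl⟩ := Finset.mem_image.mp (hT hA)
          exact Finset.mem_image.mpr ⟨S, Finset.mem_filter.mpr ⟨hS, hA⟩, rfl⟩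
        · intro A hA
          obtain ⟨S, hSf, rfl⟩ := Finset.mem_image.mp hA
          exact (Finset.mem_filter.mp hSf).2
      have hTsup : T.sup id = 𝒯.sup rootsOfSubset := by
        rw [hTeq, Finset.sup_image]
        rfl
      have hdisj : ∀ A ∈ 𝒯, ∀ B ∈ 𝒯, A ≠ B → A ∩ B = ∅ := by
        intro A hA B hB hne
        obtain ⟨hA𝒮, hAT⟩ := Finset.mem_filter.mp hA
        obtain ⟨hB𝒮, hBT⟩ := Finset.mem_filter.mp hB
        rcases hlam A hA𝒮 B hB𝒮 with h | h | h
        · exact h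
        · exfalso
          have heq := hanti _ hAT _ hBT (rootsOfSubset_mono h)
          exact hne (Finset.Subset.antisymm h
            (subset_of_rootsOfSubset_subset (hcard B hB𝒮) heq.ge))
        · exfalso
          have heq := hanti _ hBT _ hAT (rootsOfSubset_mono h)
          exact hne (Finset.Subset.antisymm
            (subset_of_rootsOfSubset_subset (hcard A hA𝒮) heq.ge) h)
      refine ⟨?_, ?_, ?_⟩
      · rw [hTsup]
        exact sup_complete hdisj
      · intro A hA S' hAS' hS'sub hS'irr
        obtain ⟨Sa, hSaf, rfl⟩ := Finset.mem_image.mp (hTeq ▸ hA : A ∈ 𝒯.image rootsOfSubset)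
        rw [hTsup] at hS'sub
        obtain ⟨Sb, hSb, hsub⟩ :=
          irred_subset_component hdisj hS'sub hS'irr.2.1 hS'irr.2.2
        have hSab : Sa ⊆ Sb := subset_of_rootsOfSubset_subset
          (hcard Sa (Finset.mem_filter.mp hSaf).1) (hAS'.trans hsub)
        have hSaSb : Sa = Sb := by
          by_contra hne
          have := hdisj Sa hSaf Sb hSb hne
          obtain ⟨a, ha, _, _, _⟩ := exists_pair_of_two_le_card
            (hcard Sa (Finset.mem_filter.mp hSaf).1)
          have : a ∈ Sa ∩ Sb := Finset.mem_inter.mpr ⟨ha, hSab ha⟩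
          rw [hdisj Sa hSaf Sb hSb hne] at this
          exact absurd this (Finset.notMem_empty a)
        subst hSaSb
        exact Finset.Subset.antisymm hsub hAS'
      · intro S' hS'sub hS'irr
        rw [hTsup] at hS'sub
        obtain ⟨Sb, hSb, hsub⟩ :=
          irred_subset_component hdisj hS'sub hS'irr.2.1 hS'irr.2.2
        exact ⟨rootsOfSubset Sb, (Finset.mem_filter.mp hSb).2, hsub⟩
end
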